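/- Eckart–Young theorem (Frobenius norm): Let φ ∈ ℝ^{d₁×d₂} have singular values σ₁ ≥ ... ≥ σ_r > 0, and let k < r. For every matrix ψ ∈ ℝ^{d₁×d₂} with rank(ψ) ≤ k, we have ‖φ − ψ‖_F ≥ sqrt(Σᵢ₌ₖ₊₁ʳ σᵢ²), with equality attained by the rank-k truncated SVD of φ. -/

import Mathlib

/-!
Write `P = B Bᵀ` for the orthogonal projection onto the column space of `ψ`, where `B` has
orthonormal columns and `rank ψ ≤ k` of them. Since `P ψ = ψ`, Pythagoras gives
`‖φ - ψ‖² ≥ ‖(1 - P) φ‖² = ∑ σᵢ² (1 - tᵢ)` with `tᵢ = ‖Bᵀ uᵢ‖²`. The weights satisfy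
`0 ≤ tᵢ ≤ 1` and `∑ tᵢ = ‖Uᵀ B‖² ≤ ‖B‖² ≤ k`, and for such weights the sum is smallest when the
`k` largest `σᵢ²` receive weight `0`, which leaves `∑_{i ≥ k} σᵢ²`. The truncated SVD attains
this value because the Frobenius norm is invariant under `U` and `Vᵀ`.
-/

open Matrix

noncomputable def frobNorm {m n : ℕ} (M : Matrix (Fin m) (Fin n) ℝ) : ℝ :=
  Real.sqrt (∑ i, ∑ j, (M i j) ^ 2)

open Finset

theorem sum_filter_le_le_sum_mul_one_sub {R : Type*} [CommRing R] [LinearOrder R]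
    [IsStrictOrderedRing R] {r : ℕ} (k : ℕ) {a t : Fin r → R} (ha : Antitone a)
    (ha0 : ∀ i, 0 ≤ a i) (ht0 : ∀ i, 0 ≤ t i) (ht1 : ∀ i, t i ≤ 1) (ht : ∑ i, t i ≤ k) :
    ∑ i ∈ univ.filter (fun i : Fin r => k ≤ (i : ℕ)), a i ≤ ∑ i, a i * (1 - t i) := by
  rcases le_or_gt r k with hrk | hkr
  · rw [filter_false_of_mem fun i _ => by omega, sum_empty]
    exact sum_nonneg fun i _ => mul_nonneg (ha0 i) (sub_nonneg.2 (ht1 i))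
  -- `c = a k` separates the `k` largest values from the others.
  set c := a ⟨k, hkr⟩
  have hpoint : ∀ i : Fin r, c * ((if (i : ℕ) < k then 1 else 0) - t i) ≤
      a i * (1 - t i) - if k ≤ (i : ℕ) then a i else 0 := by
    intro i
    by_cases hi : k ≤ (i : ℕ)
    · have : a i ≤ c := ha (Fin.le_def.2 hi)
      simp only [hi, not_lt.2 hi, if_true, if_false]
      nlinarith [ht0 i]
    · have : c ≤ a i := ha (Fin.le_def.2 (show (i : ℕ) ≤ k by omega))
      simp only [hi, lt_of_not_ge hi, if_true, if_false]
      nlinarith [ht1 i]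
  have hcount : ∑ i : Fin r, (if (i : ℕ) < k then (1 : R) else 0) = k := by
    rw [sum_boole, Fin.card_filter_val_lt, min_eq_right hkr.le]
  have hsum := sum_le_sum fun i (_ : i ∈ univ) => hpoint i
  rw [← mul_sum, sum_sub_distrib, sum_sub_distrib, hcount, ← sum_filter] at hsum
  nlinarith [ha0 ⟨k, hkr⟩]

namespace Matrix

variable {R : Type*} {l m n p : Type*}

section CommRing

variable [CommRing R]

theorem transpose_mul_self_sub_mul_transpose_mul [Fintype m] [Fintype n] [DecidableEq n]
    {A : Matrix m n R} (hA : Aᵀ * A = 1) (X : Matrix m p R) :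
    (X - A * (Aᵀ * X))ᵀ * (X - A * (Aᵀ * X)) = Xᵀ * X - (Aᵀ * X)ᵀ * (Aᵀ * X) := by
  have hAAX : Aᵀ * (A * (Aᵀ * X)) = Aᵀ * X := by rw [← Matrix.mul_assoc, hA, Matrix.one_mul]
  simp only [transpose_sub, transpose_mul, transpose_transpose, Matrix.sub_mul, Matrix.mul_sub,
    Matrix.mul_assoc, hAAX]
  abel

theorem trace_transpose_mul_self_mul_diagonal_mul_transpose [Fintype l] [Fintype m] [Fintype n]
    [DecidableEq n] {V : Matrix l n R} (hV : Vᵀ * V = 1) (C : Matrix m n R) (g : n → R) :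
    trace ((C * diagonal g * Vᵀ)ᵀ * (C * diagonal g * Vᵀ)) = ∑ i, g i ^ 2 * (Cᵀ * C) i i := by
  have hgram : (C * diagonal g * Vᵀ)ᵀ * (C * diagonal g * Vᵀ) =
      V * (diagonal g * (Cᵀ * C) * diagonal g) * Vᵀ := by
    simp only [transpose_mul, transpose_transpose, diagonal_transpose, Matrix.mul_assoc]
  rw [hgram, trace_mul_cycle, hV, Matrix.one_mul]
  simp only [trace, diag, diagonal_mul, mul_diagonal]
  exact sum_congr rfl fun i _ => by ring

end CommRing

section Ordered

variable [CommRing R] [LinearOrder R] [IsStrictOrderedRing R]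

theorem diag_transpose_mul_self_nonneg [Fintype m] (X : Matrix m n R) (i : n) :
    0 ≤ (Xᵀ * X) i i :=
  sum_nonneg fun _ _ => mul_self_nonneg _

theorem trace_transpose_mul_self_nonneg [Fintype m] [Fintype n] (X : Matrix m n R) :
    0 ≤ trace (Xᵀ * X) :=
  sum_nonneg fun i _ => diag_transpose_mul_self_nonneg X i

theorem diag_transpose_mul_self_mul_le [Fintype m] [Fintype n] [DecidableEq n]
    {A : Matrix m n R} (hA : Aᵀ * A = 1) (X : Matrix m p R) (i : p) :
    ((Aᵀ * X)ᵀ * (Aᵀ * X)) i i ≤ (Xᵀ * X) i i := by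
  have := diag_transpose_mul_self_nonneg (X - A * (Aᵀ * X)) i
  rw [transpose_mul_self_sub_mul_transpose_mul hA, sub_apply] at this
  linarith

theorem trace_transpose_mul_self_mul_le [Fintype m] [Fintype n] [Fintype p] [DecidableEq n]
    {A : Matrix m n R} (hA : Aᵀ * A = 1) (X : Matrix m p R) :
    trace ((Aᵀ * X)ᵀ * (Aᵀ * X)) ≤ trace (Xᵀ * X) :=
  sum_le_sum fun i _ => diag_transpose_mul_self_mul_le hA X i

theorem trace_sub_le_trace_transpose_mul_self_sub [Fintype m] [Fintype n] [Fintype p]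
    [DecidableEq n] {B : Matrix m n R} (hB : Bᵀ * B = 1) {ψ : Matrix m p R}
    (hψ : B * (Bᵀ * ψ) = ψ) (φ : Matrix m p R) :
    trace (φᵀ * φ) - trace ((Bᵀ * φ)ᵀ * (Bᵀ * φ)) ≤ trace ((φ - ψ)ᵀ * (φ - ψ)) := by
  have hres : (φ - ψ) - B * (Bᵀ * (φ - ψ)) = φ - B * (Bᵀ * φ) := by
    rw [Matrix.mul_sub, Matrix.mul_sub, hψ]
    abel
  have hpyth := congrArg trace (transpose_mul_self_sub_mul_transpose_mul hB (φ - ψ))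
  rw [hres, transpose_mul_self_sub_mul_transpose_mul hB, trace_sub, trace_sub] at hpyth
  linarith [trace_transpose_mul_self_nonneg (Bᵀ * (φ - ψ))]

end Ordered

theorem exists_orthonormal_columns_mul_transpose_mul_eq_self [Fintype m] [Fintype n]
    (ψ : Matrix m n ℝ) :
    ∃ B : Matrix m (Fin ψ.rank) ℝ, Bᵀ * B = 1 ∧ B * (Bᵀ * ψ) = ψ := by
  set W := (Submodule.span ℝ (Set.range ψ.col)).map
    (WithLp.linearEquiv 2 ℝ (m → ℝ)).symm.toLinearMap
  have hW : Module.finrank ℝ W = ψ.rank := by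
    rw [LinearEquiv.finrank_map_eq, rank_eq_finrank_span_cols]
  let b := (stdOrthonormalBasis ℝ W).reindex (finCongr hW)
  have hinner : ∀ (x : W) q, inner ℝ (b q) x =
      ∑ l, (b q : EuclideanSpace ℝ m) l * (x : EuclideanSpace ℝ m) l := by
    intro x q
    rw [Submodule.coe_inner, EuclideanSpace.inner_eq_star_dotProduct]
    simp [dotProduct, mul_comm]
  refine ⟨of fun i q => (b q : EuclideanSpace ℝ m) i, ?_, ?_⟩
  · ext q q'
    have := orthonormal_iff_ite.1 b.orthonormal q q'
    rw [hinner] at this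
    simpa [Matrix.mul_apply, Matrix.one_apply] using this
  · ext i j
    have hcol : WithLp.toLp 2 (ψ.col j) ∈ W :=
      Submodule.mem_map_of_mem (Submodule.subset_span ⟨j, rfl⟩)
    have hexpand := congrArg (fun x : W => (x : EuclideanSpace ℝ m) i) (b.sum_repr' ⟨_, hcol⟩)
    simp only [hinner, Matrix.mul_apply, col_apply, AddSubmonoidClass.coe_finsetSum,
      SetLike.val_smul, WithLp.ofLp_sum, WithLp.ofLp_smul, Finset.sum_apply, Pi.smul_apply,
      smul_eq_mul, of_apply, transpose_apply] at hexpand ⊢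
    rw [← hexpand]
    exact sum_congr rfl fun q _ => mul_comm _ _

end Matrix
theorem frobNorm_eq_sqrt_trace {m n : ℕ} (M : Matrix (Fin m) (Fin n) ℝ) :
    frobNorm M = √(trace (Mᵀ * M)) := by
  simp only [frobNorm, Matrix.trace, Matrix.diag, mul_apply, transpose_apply, sq]
  rw [sum_comm]

theorem frobNorm_mul_diagonal_mul_transpose {m n r : ℕ} {U : Matrix (Fin m) (Fin r) ℝ}
    {V : Matrix (Fin n) (Fin r) ℝ} (hU : Uᵀ * U = 1) (hV : Vᵀ * V = 1) (g : Fin r → ℝ) :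
    frobNorm (U * diagonal g * Vᵀ) = √(∑ i, g i ^ 2) := by
  rw [frobNorm_eq_sqrt_trace, trace_transpose_mul_self_mul_diagonal_mul_transpose hV, hU]
  simp

theorem eckart_young_frobenius_general {d₁ d₂ r : ℕ}
    (φ : Matrix (Fin d₁) (Fin d₂) ℝ)
    (U : Matrix (Fin d₁) (Fin r) ℝ) (V : Matrix (Fin d₂) (Fin r) ℝ)
    (σ : Fin r → ℝ)
    (hU : Uᵀ * U = 1) (hV : Vᵀ * V = 1)
    (hσpos : ∀ i, 0 < σ i) (hσmono : Antitone σ)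
    (hφ : φ = U * Matrix.diagonal σ * Vᵀ)
    (k : ℕ) :
    (∀ ψ : Matrix (Fin d₁) (Fin d₂) ℝ, ψ.rank ≤ k →
        Real.sqrt (∑ i ∈ Finset.univ.filter (fun i : Fin r => k ≤ (i : ℕ)), (σ i) ^ 2) ≤
          frobNorm (φ - ψ)) ∧
      frobNorm (φ - U * Matrix.diagonal (fun i : Fin r => if (i : ℕ) < k then σ i else 0) * Vᵀ) =
        Real.sqrt (∑ i ∈ Finset.univ.filter (fun i : Fin r => k ≤ (i : ℕ)), (σ i) ^ 2) := by
  refine ⟨fun ψ hψ => ?_, ?_⟩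
  · obtain ⟨B, hB, hBψ⟩ := exists_orthonormal_columns_mul_transpose_mul_eq_self ψ
    set t : Fin r → ℝ := fun i => ((Bᵀ * U)ᵀ * (Bᵀ * U)) i i
    have ht1 : ∀ i, t i ≤ 1 := fun i =>
      (diag_transpose_mul_self_mul_le hB U i).trans_eq (by rw [hU, one_apply_eq])
    have ht : ∑ i, t i ≤ k := calc
      ∑ i, t i = trace ((Bᵀ * U)ᵀ * (Bᵀ * U)) := rfl
      _ = trace ((Uᵀ * B)ᵀ * (Uᵀ * B)) := by
        rw [trace_mul_comm]
        simp only [transpose_mul, transpose_transpose]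
      _ ≤ trace (Bᵀ * B) := trace_transpose_mul_self_mul_le hU B
      _ ≤ k := by simpa [hB] using hψ
    rw [frobNorm_eq_sqrt_trace]
    refine Real.sqrt_le_sqrt ?_
    calc ∑ i ∈ univ.filter (fun i : Fin r => k ≤ (i : ℕ)), σ i ^ 2
        ≤ ∑ i, σ i ^ 2 * (1 - t i) :=
          sum_filter_le_le_sum_mul_one_sub k
            (fun i j hij => pow_le_pow_left₀ (hσpos j).le (hσmono hij) 2)
            (fun i => sq_nonneg _) (fun i => diag_transpose_mul_self_nonneg _ i) ht1 ht
      _ = trace (φᵀ * φ) - trace ((Bᵀ * φ)ᵀ * (Bᵀ * φ)) := by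
        rw [hφ, ← Matrix.mul_assoc Bᵀ, ← Matrix.mul_assoc Bᵀ,
          trace_transpose_mul_self_mul_diagonal_mul_transpose hV,
          trace_transpose_mul_self_mul_diagonal_mul_transpose hV, hU]
        simp [t, mul_sub, sum_sub_distrib]
      _ ≤ trace ((φ - ψ)ᵀ * (φ - ψ)) := trace_sub_le_trace_transpose_mul_self_sub hB hBψ φ
  · have htail : φ - U * diagonal (fun i : Fin r => if (i : ℕ) < k then σ i else 0) * Vᵀ =
        U * diagonal (fun i : Fin r => if (i : ℕ) < k then 0 else σ i) * Vᵀ := by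
      rw [hφ, ← Matrix.sub_mul, ← Matrix.mul_sub, diagonal_sub]
      congr 3
      funext i
      split_ifs <;> simp
    rw [htail, frobNorm_mul_diagonal_mul_transpose hU hV, sum_filter]
    congr 1
    refine sum_congr rfl fun i _ => ?_
    split_ifs <;> first | omega | simp

theorem eckart_young_frobenius {d₁ d₂ r : ℕ}
    (φ : Matrix (Fin d₁) (Fin d₂) ℝ)
    (U : Matrix (Fin d₁) (Fin r) ℝ) (V : Matrix (Fin d₂) (Fin r) ℝ)
    (σ : Fin r → ℝ)
    (hU : Uᵀ * U = 1) (hV : Vᵀ * V = 1)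
    (hσpos : ∀ i, 0 < σ i) (hσmono : Antitone σ)
    (hφ : φ = U * Matrix.diagonal σ * Vᵀ)
    (k : ℕ) (hk : k < r) :
    (∀ ψ : Matrix (Fin d₁) (Fin d₂) ℝ, ψ.rank ≤ k →
        Real.sqrt (∑ i ∈ Finset.univ.filter (fun i : Fin r => k ≤ (i : ℕ)), (σ i) ^ 2) ≤
          frobNorm (φ - ψ)) ∧
      frobNorm (φ - U * Matrix.diagonal (fun i : Fin r => if (i : ℕ) < k then σ i else 0) * Vᵀ) =
        Real.sqrt (∑ i ∈ Finset.univ.filter (fun i : Fin r => k ≤ (i : ℕ)), (σ i) ^ 2) :=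
  eckart_young_frobenius_general φ U V σ hU hV hσpos hσmono hφ k
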